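/- arXiv:1902.01507 — 6 statements merged into one kernel-verified Lean document; each statement's English description precedes it below -/
import Mathlib

section
/- Let 𝒪 be a factorial ring, k ≥ 2 an integer, and f_1, …, f_k ∈ 𝒪 elements such that each f_i is not a unit and f_i, f_j are relatively prime for all i ≠ j. Set F := f_1 f_2 ⋯ f_k. Then the diagonal map 𝒪/(F) → ⊕_{i=1}^k 𝒪/(f_i) is injective, and its cokernel N admits a filtration by 𝒪-submodules 0 = N_0 ⊆ N_1 ⊆ ⋯ ⊆ N_{k−1} = N such that N_i / N_{i−1} ≅ 𝒪/(f_i, f_{i+1} f_{i+2} ⋯ f_k) as 𝒪-modules for i = 1, …, k−1. -/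
/-!
Index `f` from `0` and let `V i ⊆ ⊕ⱼ 𝒪/(fⱼ)` be the tuples vanishing in coordinates `j ≥ i`;
`Nᵢ` is the image of `V i` in the cokernel. A tuple of `V (m+1)` lies in `V m + im(diag)` exactly
when its `m`-th coordinate is the class of a multiple of `g = f_{m+1}⋯f_{k-1}`, because pairwise
relatively prime elements dividing `c` have their product dividing `c` (the same fact, applied to
all of `F`, gives injectivity). Hence reading the `m`-th coordinate modulo `(f_m, g)` identifies
`N_{m+1}/N_m` with `𝒪/(f_m, g)`, and subtracting the diagonal image of the last coordinate shows
that `N_{k-1}` is everything.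
-/

open Ideal

/-- The diagonal map `𝒪/(f₁⋯f_k) → ⊕ᵢ 𝒪/(fᵢ)`, as an `𝒪`-linear map. -/
noncomputable def diagLinMap {O : Type*} [CommRing O] {k : ℕ} (f : Fin k → O) :
    (O ⧸ Ideal.span {∏ i, f i}) →ₗ[O] ∀ i : Fin k, O ⧸ Ideal.span {f i} :=
  Submodule.liftQ (Ideal.span {∏ i, f i})
    (LinearMap.pi fun i => (Ideal.span {f i}).mkQ)
    (by
      rw [Ideal.span_le, Set.singleton_subset_iff]
      simp only [SetLike.mem_coe, LinearMap.mem_ker]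
      funext i
      simp only [LinearMap.pi_apply, Submodule.mkQ_apply, Pi.zero_apply,
        Submodule.Quotient.mk_eq_zero]
      exact Ideal.mem_span_singleton.mpr (Finset.dvd_prod_of_mem f (Finset.mem_univ i)))

open Submodule Function

section Subquotient

variable {R M : Type*} [Ring R] [AddCommGroup M] [Module R M] (Q P P' : Submodule R M)

lemma ker_mkQ_comp_submoduleMap_mkQ :
    LinearMap.ker ((comap (P.map Q.mkQ).subtype (P'.map Q.mkQ)).mkQ ∘ₗ Q.mkQ.submoduleMap P) =
      comap P.subtype (P' ⊔ Q) := by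
  ext x
  simp only [LinearMap.mem_ker, LinearMap.comp_apply, mkQ_apply, Submodule.Quotient.mk_eq_zero,
    Submodule.mem_comap, subtype_apply, LinearMap.submoduleMap_coe_apply]
  rw [← mkQ_apply, ← Submodule.mem_comap, comap_map_mkQ, sup_comm]

noncomputable def mapMkQQuotientEquiv :
    (P.map Q.mkQ ⧸ comap (P.map Q.mkQ).subtype (P'.map Q.mkQ)) ≃ₗ[R]
      P ⧸ comap P.subtype (P' ⊔ Q) :=
  (LinearMap.quotKerEquivOfSurjective
      ((comap (P.map Q.mkQ).subtype (P'.map Q.mkQ)).mkQ ∘ₗ Q.mkQ.submoduleMap P)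
      ((mkQ_surjective _).comp (Q.mkQ.submoduleMap_surjective P))).symm ≪≫ₗ
    Submodule.quotEquivOfEq _ _ (ker_mkQ_comp_submoduleMap_mkQ Q P P')

end Subquotient

section Filtration

variable {O : Type*} [CommRing O] {k : ℕ} (f : Fin k → O)

lemma diagLinMap_mk_apply (c : O) (j : Fin k) :
    diagLinMap f (Submodule.Quotient.mk c) j = Submodule.Quotient.mk c :=
  rfl

lemma diagLinMap_injective [DecompositionMonoid O] (hrel : Pairwise (IsRelPrime on f)) :
    Injective (diagLinMap f) := by
  refine LinearMap.ker_eq_bot.mp <| ker_liftQ_eq_bot _ _ _ fun c hc => ?_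
  rw [LinearMap.mem_ker, funext_iff] at hc
  refine Ideal.mem_span_singleton.mpr (Fintype.prod_dvd_of_isRelPrime hrel fun j => ?_)
  exact Ideal.mem_span_singleton.mp ((Submodule.Quotient.mk_eq_zero _).mp (hc j))

def vanishingFrom (i : ℕ) : Submodule O (∀ j : Fin k, O ⧸ Ideal.span {f j}) where
  carrier := {x | ∀ j : Fin k, i ≤ j.val → x j = 0}
  add_mem' hx hy j hj := by simp [hx j hj, hy j hj]
  zero_mem' _ _ := rfl
  smul_mem' c _ hx j hj := by simp [hx j hj]

lemma vanishingFrom_mono : Monotone (vanishingFrom f) :=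
  fun _ _ h _ hx j hj => hx j (h.trans hj)

lemma vanishingFrom_zero : vanishingFrom f 0 = ⊥ :=
  eq_bot_iff.mpr fun _ hx => funext fun j => hx j j.val.zero_le

lemma vanishingFrom_sub_one_sup_range :
    vanishingFrom f (k - 1) ⊔ LinearMap.range (diagLinMap f) = ⊤ := by
  refine eq_top_iff.mpr fun x _ => ?_
  cases k with
  | zero => exact mem_sup_left fun j => j.elim0
  | succ n =>
    obtain ⟨c, hc⟩ := Submodule.Quotient.mk_surjective _ (x (Fin.last n))
    refine mem_sup.mpr ⟨x - diagLinMap f (Submodule.Quotient.mk c), fun j hj => ?_,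
      _, LinearMap.mem_range_self _ _, sub_add_cancel _ _⟩
    obtain rfl : j = Fin.last n := Fin.ext (by simp only [Fin.val_last] at hj ⊢; omega)
    rw [Pi.sub_apply, diagLinMap_mk_apply, hc, sub_self]

variable (m : Fin k)

abbrev tailProd : O := ∏ j ∈ Finset.univ.filter fun j : Fin k => (m : ℕ) + 1 ≤ j.val, f j

lemma dvd_tailProd {j : Fin k} (hj : (m : ℕ) + 1 ≤ j.val) : f j ∣ tailProd f m :=
  Finset.dvd_prod_of_mem f (Finset.mem_filter.mpr ⟨Finset.mem_univ j, hj⟩)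

noncomputable def layerMap :
    vanishingFrom f (m + 1) →ₗ[O] O ⧸ Ideal.span {f m, tailProd f m} :=
  (factor (Ideal.span_mono (Set.singleton_subset_iff.mpr (Set.mem_insert _ _)))).comp
    ((LinearMap.proj m).comp (vanishingFrom f (m + 1)).subtype)

lemma layerMap_surjective : Surjective (layerMap f m) := by
  intro t
  obtain ⟨c, rfl⟩ := Submodule.Quotient.mk_surjective _ t
  refine ⟨⟨Pi.single m (Submodule.Quotient.mk c), fun j hj => ?_⟩, ?_⟩
  · exact Pi.single_eq_of_ne (fun h => by subst h; omega) _
  · simp [layerMap]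

lemma mem_vanishingFrom_sup_range_iff [DecompositionMonoid O]
    (hrel : Pairwise (IsRelPrime on f)) {x : ∀ j : Fin k, O ⧸ Ideal.span {f j}}
    (hx : x ∈ vanishingFrom f (m + 1)) :
    x ∈ vanishingFrom f m ⊔ LinearMap.range (diagLinMap f) ↔
      ∃ d, tailProd f m ∣ d ∧ x m = Submodule.Quotient.mk d := by
  constructor
  · intro hmem
    obtain ⟨y, hy, _, ⟨d', rfl⟩, rfl⟩ := mem_sup.mp hmem
    obtain ⟨d, rfl⟩ := Submodule.Quotient.mk_surjective _ d'
    have hdvd : ∀ j : Fin k, (m : ℕ) + 1 ≤ j.val → f j ∣ d := fun j hj => by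
      have hxj := hx j hj
      rw [Pi.add_apply, hy j (by omega), zero_add, diagLinMap_mk_apply,
        Submodule.Quotient.mk_eq_zero] at hxj
      exact Ideal.mem_span_singleton.mp hxj
    refine ⟨d, Finset.prod_dvd_of_isRelPrime (hrel.set_pairwise _)
      fun j hj => hdvd j (Finset.mem_filter.mp hj).2, ?_⟩
    rw [Pi.add_apply, hy m le_rfl, zero_add, diagLinMap_mk_apply]
  · rintro ⟨d, hd, hxm⟩
    refine mem_sup.mpr ⟨x - diagLinMap f (Submodule.Quotient.mk d), fun j hj => ?_,
      _, LinearMap.mem_range_self _ _, sub_add_cancel _ _⟩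
    rw [Pi.sub_apply, diagLinMap_mk_apply]
    rcases hj.lt_or_eq with hlt | heq
    · rw [hx j hlt, zero_sub, neg_eq_zero, Submodule.Quotient.mk_eq_zero,
        Ideal.mem_span_singleton]
      exact (dvd_tailProd f m hlt).trans hd
    · obtain rfl : m = j := Fin.ext heq
      rw [hxm, sub_self]

lemma ker_layerMap [DecompositionMonoid O] (hrel : Pairwise (IsRelPrime on f)) :
    LinearMap.ker (layerMap f m) = (vanishingFrom f m ⊔ LinearMap.range (diagLinMap f)).comap
      (vanishingFrom f (m + 1)).subtype := by
  ext ⟨x, hx⟩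
  rw [Submodule.mem_comap, subtype_apply, mem_vanishingFrom_sup_range_iff f m hrel hx,
    LinearMap.mem_ker]
  obtain ⟨c, hc⟩ := Submodule.Quotient.mk_surjective _ (x m)
  have hlayer : layerMap f m ⟨x, hx⟩ = Submodule.Quotient.mk c := by simp [layerMap, ← hc]
  rw [hlayer, Submodule.Quotient.mk_eq_zero, Ideal.mem_span_pair]
  constructor
  · rintro ⟨u, v, huv⟩
    refine ⟨v * tailProd f m, dvd_mul_left _ _, ?_⟩
    rw [← hc, Submodule.Quotient.eq, Ideal.mem_span_singleton]
    exact ⟨u, by linear_combination -huv⟩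
  · rintro ⟨d, ⟨v, rfl⟩, hxm⟩
    rw [← hc, Submodule.Quotient.eq, Ideal.mem_span_singleton] at hxm
    obtain ⟨u, hu⟩ := hxm
    exact ⟨u, v, by linear_combination -hu⟩

noncomputable abbrev cokerFiltration (i : ℕ) :
    Submodule O ((∀ j : Fin k, O ⧸ Ideal.span {f j}) ⧸ LinearMap.range (diagLinMap f)) :=
  (vanishingFrom f i).map (LinearMap.range (diagLinMap f)).mkQ

lemma nonempty_cokerFiltration_quotient_equiv [DecompositionMonoid O]
    (hrel : Pairwise (IsRelPrime on f)) :
    Nonempty ((cokerFiltration f (m + 1) ⧸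
        comap (cokerFiltration f (m + 1)).subtype (cokerFiltration f m)) ≃ₗ[O]
      O ⧸ Ideal.span {f m, tailProd f m}) :=
  ⟨mapMkQQuotientEquiv _ _ _ ≪≫ₗ
    Submodule.quotEquivOfEq _ _ (ker_layerMap f m hrel).symm ≪≫ₗ
    (layerMap f m).quotKerEquivOfSurjective (layerMap_surjective f m)⟩

end Filtration

/-- Corollary 1.4: for `𝒪` a factorial ring and `f₁, …, f_k` pairwise relatively prime
non-units, the diagonal map `𝒪/(F) → ⊕ᵢ 𝒪/(fᵢ)` (where `F = f₁f₂⋯f_k`) is injective,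
and its cokernel `N` admits a filtration `0 = N₀ ⊆ N₁ ⊆ ⋯ ⊆ N_{k-1} = N` with
`Nᵢ/N_{i-1} ≅ 𝒪/(fᵢ, f_{i+1}⋯f_k)` for `i = 1, …, k-1` (here `f` is `0`-indexed, so the
paper's `fᵢ` is `f ⟨i-1, _⟩`). -/
theorem coker_diag_filtration {O : Type*} [CommRing O] [IsDomain O]
    [UniqueFactorizationMonoid O] (k : ℕ) (f : Fin k → O)
    (hrel : ∀ i j, i ≠ j → IsRelPrime (f i) (f j)) :
    Function.Injective (diagLinMap f) ∧
    ∃ N : ℕ → Submodule O ((∀ i : Fin k, O ⧸ Ideal.span {f i}) ⧸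
        LinearMap.range (diagLinMap f)),
      Monotone N ∧ N 0 = ⊥ ∧ N (k - 1) = ⊤ ∧
      ∀ (i : ℕ) (_h1 : 1 ≤ i) (_h2 : i ≤ k - 1),
        Nonempty ((N i ⧸ Submodule.comap (N i).subtype (N (i - 1))) ≃ₗ[O]
          O ⧸ Ideal.span {f ⟨i - 1, by omega⟩,
            ∏ j ∈ Finset.univ.filter fun j : Fin k => i ≤ j.val, f j}) := by
  have hpairwise : Pairwise (IsRelPrime on f) := fun i j hij => hrel i j hij
  refine ⟨diagLinMap_injective f hpairwise, cokerFiltration f,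
    fun _ _ h => map_mono (vanishingFrom_mono f h), ?_, ?_, ?_⟩
  · rw [cokerFiltration, vanishingFrom_zero, Submodule.map_bot]
  · rw [cokerFiltration, map_mkQ_eq_top, sup_comm, vanishingFrom_sub_one_sup_range]
  · rintro _ h1 h2
    obtain ⟨m, rfl⟩ := Nat.exists_eq_add_of_le' h1
    exact nonempty_cokerFiltration_quotient_equiv f ⟨m, by omega⟩ hpairwise
end

section
/- Let 𝒪 be a factorial ring, k ≥ 2 an integer, and f_1, …, f_k ∈ 𝒪 elements such that each f_i is not a unit and f_i, f_j are relatively prime for all i ≠ j. Then the 𝒪-module 𝒪/(f_1, f_2 f_3 ⋯ f_k) admits a filtration by 𝒪-submodules 0 = M_0 ⊆ M_1 ⊆ ⋯ ⊆ M_{k−1} = 𝒪/(f_1, f_2 ⋯ f_k) whose successive quotients M_j / M_{j−1} (j = 1, …, k−1) are, in some order, isomorphic to the modules 𝒪/(f_1, f_2), 𝒪/(f_1, f_3), …, 𝒪/(f_1, f_k). -/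
/-!
Let `pₘ = f_{m+1} ⋯ f_{k-1}` and `I = (f₀, p₀)`, and take for `Mₘ` the image of `(pₘ)` in `𝒪/I`.
Multiplication by `p_{m+1}` maps `𝒪` onto `M_{m+1}` and identifies `M_{m+1}/Mₘ` with `𝒪/K`, where
`K = {x | x p_{m+1} ∈ (pₘ) + I} = (f₀, f_{m+1} p_{m+1}) : p_{m+1}`. Since `f₀` is prime to `p_{m+1}`
and `𝒪` is factorial, `f₀ ∣ y p_{m+1}` forces `f₀ ∣ y`, so this colon ideal is `(f₀, f_{m+1})`.
-/

open Ideal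

section

variable {R : Type*} [CommRing R]

theorem Ideal.mul_mem_span_pair_mul_iff [DecompositionMonoid R] {a q : R} (h : IsRelPrime a q)
    (g x : R) : x * q ∈ span {a, g * q} ↔ x ∈ span {a, g} := by
  simp only [mem_span_pair]
  constructor
  · rintro ⟨u, v, huv⟩
    obtain ⟨w, hw⟩ : a ∣ x - v * g := h.dvd_of_dvd_mul_right ⟨u, by linear_combination -huv⟩
    exact ⟨w, v, by linear_combination -hw⟩
  · rintro ⟨u, v, rfl⟩
    exact ⟨u * q, v, by ring⟩

theorem Ideal.span_singleton_sup_span_pair_of_dvd {r P : R} (hP : r ∣ P) (a : R) :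
    span {r} ⊔ span {a, P} = span {a, r} := by
  rw [span_insert, span_insert, sup_left_comm,
    sup_eq_left.2 (span_singleton_le_span_singleton.2 hP)]

theorem Ideal.nonempty_map_mkQ_span_singleton_quotient_equiv (I J K : Ideal R) (q : R)
    (hK : ∀ x, x * q ∈ J ⊔ I ↔ x ∈ K) :
    Nonempty ((Submodule.map I.mkQ (span {q}) ⧸
        Submodule.comap (Submodule.map I.mkQ (span {q})).subtype (Submodule.map I.mkQ J))
      ≃ₗ[R] R ⧸ K) := by
  set N := Submodule.map I.mkQ (span {q})
  let mulQ : R →ₗ[R] N := LinearMap.codRestrict N (I.mkQ ∘ₗ LinearMap.toSpanSingleton R R q)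
    fun x => Submodule.mem_map_of_mem (mem_span_singleton.2 (dvd_mul_left q x))
  have mulQ_surjective : Function.Surjective mulQ := by
    rintro ⟨_, y, hy, rfl⟩
    obtain ⟨x, rfl⟩ := mem_span_singleton'.1 hy
    exact ⟨x, rfl⟩
  set ψ := (Submodule.comap N.subtype (Submodule.map I.mkQ J)).mkQ ∘ₗ mulQ
  have hker : LinearMap.ker ψ = K := by
    ext x
    rw [← hK, LinearMap.mem_ker, LinearMap.comp_apply, Submodule.mkQ_apply,
      Submodule.Quotient.mk_eq_zero, Submodule.mem_comap, Submodule.subtype_apply]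
    change I.mkQ (x * q) ∈ _ ↔ _
    rw [← Submodule.mem_comap, Submodule.comap_map_mkQ, sup_comm]
  have ψ_surjective : Function.Surjective ψ := (Submodule.mkQ_surjective _).comp mulQ_surjective
  exact ⟨(ψ.quotKerEquivOfSurjective ψ_surjective).symm.trans (Submodule.quotEquivOfEq _ _ hker)⟩

end

section

variable {M : Type*} [CommMonoid M] {k : ℕ} (f : Fin k → M)

def prodAbove (m : ℕ) : M :=
  ∏ j ∈ Finset.univ.filter fun j : Fin k => m < j.val, f j

theorem prodAbove_zero :
    prodAbove f 0 = ∏ j ∈ Finset.univ.filter fun j : Fin k => j.val ≠ 0, f j := by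
  simp only [prodAbove, Nat.pos_iff_ne_zero]

theorem prodAbove_eq_mul_prodAbove_succ {m : ℕ} (hm : m + 1 < k) :
    prodAbove f m = f ⟨m + 1, hm⟩ * prodAbove f (m + 1) := by
  have hsplit : (Finset.univ.filter fun j : Fin k => m < j.val) =
      insert ⟨m + 1, hm⟩ (Finset.univ.filter fun j : Fin k => m + 1 < j.val) := by
    ext j
    simp only [Finset.mem_filter, Finset.mem_univ, true_and, Finset.mem_insert, Fin.ext_iff]
    omega
  rw [prodAbove, hsplit, Finset.prod_insert (by simp)]
  rfl

theorem prodAbove_dvd_prodAbove {m n : ℕ} (h : m ≤ n) : prodAbove f n ∣ prodAbove f m :=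
  Finset.prod_dvd_prod_of_subset _ _ _ fun j => by
    simp only [Finset.mem_filter, Finset.mem_univ, true_and]; omega

theorem prodAbove_eq_one {m : ℕ} (hm : k ≤ m + 1) : prodAbove f m = 1 :=
  Finset.prod_eq_one fun j hj => absurd (Finset.mem_filter.1 hj).2 (by have := j.isLt; omega)

theorem isRelPrime_prodAbove [DecompositionMonoid M] {a : M} {m : ℕ}
    (h : ∀ j : Fin k, m < j.val → IsRelPrime a (f j)) : IsRelPrime a (prodAbove f m) :=
  IsRelPrime.prod_right fun j hj => h j (Finset.mem_filter.1 hj).2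

end

set_option synthInstance.maxHeartbeats 1000000 in
/-- Lemma 1.6: for `𝒪` a factorial ring and `f₁, …, f_k` pairwise relatively prime
non-units (here `0`-indexed, so the paper's `f₁` is `f 0`), the `𝒪`-module
`𝒪/(f₁, f₂f₃⋯f_k)` admits a filtration `0 = M₀ ⊆ M₁ ⊆ ⋯ ⊆ M_{k-1} = 𝒪/(f₁, f₂⋯f_k)`
whose successive quotients are, in some order, the modules `𝒪/(f₁, fⱼ)`, `j = 2, …, k`. -/
theorem quotient_filtration_graded_pieces {O : Type*} [CommRing O] [IsDomain O]
    [UniqueFactorizationMonoid O] (k : ℕ) (hk : 2 ≤ k) (f : Fin k → O)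
    (hrel : ∀ i j, i ≠ j → IsRelPrime (f i) (f j)) :
    ∃ M : ℕ → Submodule O
        (O ⧸ Ideal.span {f ⟨0, by omega⟩, ∏ j ∈ Finset.univ.filter fun j : Fin k => j.val ≠ 0, f j}),
      Monotone M ∧ M 0 = ⊥ ∧ M (k - 1) = ⊤ ∧
      ∃ e : Equiv.Perm (Fin (k - 1)),
        ∀ i : Fin (k - 1),
          Nonempty ((M (i.val + 1) ⧸
              Submodule.comap (M (i.val + 1)).subtype (M i.val)) ≃ₗ[O]
            O ⧸ Ideal.span {f ⟨0, by omega⟩, f ⟨(e i).val + 1, by have := (e i).isLt; omega⟩}) := by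
  set a := f ⟨0, by omega⟩
  rw [← prodAbove_zero]
  set I : Ideal O := span {a, prodAbove f 0}
  refine ⟨fun m => Submodule.map I.mkQ (span {prodAbove f m}), ?_, ?_, ?_, Equiv.refl _,
    fun i => ?_⟩
  · exact fun m n hmn =>
      Submodule.map_mono (span_singleton_le_span_singleton.2 (prodAbove_dvd_prodAbove f hmn))
  · rw [← LinearMap.le_ker_iff_map, Submodule.ker_mkQ, span_singleton_le_iff_mem]
    exact subset_span (Set.mem_insert_of_mem _ rfl)
  · simp only [prodAbove_eq_one f (Nat.sub_add_cancel (by omega : 1 ≤ k)).ge, span_singleton_one,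
      Submodule.map_top, Submodule.range_mkQ]
  · have hi : i.val + 1 < k := by omega
    have hcop : IsRelPrime a (prodAbove f (i.val + 1)) :=
      isRelPrime_prodAbove f fun j hj => hrel _ _ (Fin.ne_of_lt (show 0 < j.val by omega))
    refine nonempty_map_mkQ_span_singleton_quotient_equiv _ _ _ _ fun x => ?_
    rw [span_singleton_sup_span_pair_of_dvd (prodAbove_dvd_prodAbove f i.val.zero_le),
      prodAbove_eq_mul_prodAbove_succ f hi, mul_mem_span_pair_mul_iff hcop]
    rfl
end

section
/- Let d, m be positive integers with d < m. If it is NOT the case that d divides m and m/d = p^k is a positive power of a prime p, then the ideal of ℤ[X] generated by Φ_d and Φ_m is the unit ideal; equivalently, the quotient ring R_{d,m} = ℤ[X]/(Φ_d, Φ_m) is the zero ring. -/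
open Polynomial

/-- Part of Theorem 2.3 (Lehmer, Diederichsen, Apostol, Dresden): if `d < m` and it is not
the case that `d ∣ m` with `m/d` a positive prime power, then the ideal `(Φ_d, Φ_m)` of
`ℤ[X]` is the unit ideal, i.e. `R_{d,m} = ℤ[X]/(Φ_d, Φ_m)` is the zero ring. -/
theorem span_cyclotomic_eq_top_of_not_primePow_ratio (d m : ℕ) (hd : 0 < d) (hm : 0 < m)
    (hdm : d < m)
    (h : ¬ (d ∣ m ∧ ∃ p k : ℕ, p.Prime ∧ 1 ≤ k ∧ m = p ^ k * d)) :
    Ideal.span {cyclotomic d ℤ, cyclotomic m ℤ} = ⊤ := by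
  by_contra hne
  obtain ⟨M, hMmax, hMle⟩ := Ideal.exists_le_maximal _ hne
  haveI := hMmax
  set α : ℤ[X] ⧸ M := Ideal.Quotient.mk M X with hα
  have hdmem : cyclotomic d ℤ ∈ M := hMle (Ideal.subset_span (by simp))
  have hmmem : cyclotomic m ℤ ∈ M := hMle (Ideal.subset_span (by simp))
  have key : ∀ n : ℕ, cyclotomic n ℤ ∈ M → (cyclotomic n (ℤ[X] ⧸ M)).IsRoot α := by
    intro n hn
    have : (Ideal.Quotient.mkₐ ℤ M) (cyclotomic n ℤ) = 0 := by
      rw [Ideal.Quotient.mkₐ_eq_mk, Ideal.Quotient.eq_zero_iff_mem]; exact hn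
    have h2 : aeval α (cyclotomic n ℤ) = 0 := by
      rw [hα, show (Ideal.Quotient.mk M X) = (Ideal.Quotient.mkₐ ℤ M) X from rfl,
        aeval_algHom_apply]
      simp [this]
    rwa [aeval_def, eval₂_eq_eval_map, map_cyclotomic] at h2
  have hrootd := key d hdmem
  have hrootm := key m hmmem
  obtain ⟨p, hp⟩ : ∃ p, CharP (ℤ[X] ⧸ M) p := ⟨ringChar (ℤ[X] ⧸ M), ringChar.charP _⟩
  haveI := hp
  rcases CharP.char_is_prime_or_zero (ℤ[X] ⧸ M) p with hprime | hzero
  · -- characteristic p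
    haveI : Fact p.Prime := ⟨hprime⟩
    set a := d.factorization p with ha
    set b := m.factorization p with hb
    set d' := ordCompl[p] d with hd'
    set m' := ordCompl[p] m with hm'
    have hdd : p ^ a * d' = d := Nat.ordProj_mul_ordCompl_eq_self d p
    have hmm : p ^ b * m' = m := Nat.ordProj_mul_ordCompl_eq_self m p
    have hpd' : ¬ p ∣ d' := Nat.not_dvd_ordCompl hprime hd.ne'
    have hpm' : ¬ p ∣ m' := Nat.not_dvd_ordCompl hprime hm.ne'
    haveI : NeZero (d' : ℤ[X] ⧸ M) := NeZero.of_not_dvd _ hpd'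
    haveI : NeZero (m' : ℤ[X] ⧸ M) := NeZero.of_not_dvd _ hpm'
    have hprd : IsPrimitiveRoot α d' := by
      rw [← isRoot_cyclotomic_prime_pow_mul_iff_of_charP (k := a) (p := p)]
      rwa [hdd]
    have hprm : IsPrimitiveRoot α m' := by
      rw [← isRoot_cyclotomic_prime_pow_mul_iff_of_charP (k := b) (p := p)]
      rwa [hmm]
    have heq : d' = m' := hprd.unique hprm
    have hd'pos : 0 < d' := Nat.ordCompl_pos p hd.ne'
    have hab : a < b := by
      by_contra hab
      push_neg at hab
      have : m ≤ d := by
        rw [← hdd, ← hmm, heq]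
        exact Nat.mul_le_mul_right _ (Nat.pow_le_pow_right hprime.pos hab)
      omega
    have hmd : m = p ^ (b - a) * d := by
      rw [← hdd, ← hmm, heq, ← pow_sub_mul_pow p hab.le, mul_assoc]
    exact h ⟨⟨p ^ (b - a), by rw [hmd]; ring⟩, p, b - a, hprime, by omega, hmd⟩
  · -- characteristic zero
    haveI : CharP (ℤ[X] ⧸ M) 0 := hzero ▸ hp
    haveI : CharZero (ℤ[X] ⧸ M) := CharP.charP_to_charZero _
    haveI : NeZero (d : ℤ[X] ⧸ M) := ⟨Nat.cast_ne_zero.mpr hd.ne'⟩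
    haveI : NeZero (m : ℤ[X] ⧸ M) := ⟨Nat.cast_ne_zero.mpr hm.ne'⟩
    rw [isRoot_cyclotomic_iff] at hrootd hrootm
    exact absurd (hrootd.unique hrootm) hdm.ne
end

section
/- Let d ≥ 1 be an integer, p a prime, and k ≥ 1 an integer, and set m := p^k d. Then the contraction to ℤ of the ideal of ℤ[X] generated by Φ_d and Φ_m is the ideal generated by p; that is, (Φ_d, Φ_{p^k d}) ∩ ℤ = pℤ. -/
open Polynomial

/-! Write `pᵏd = n p` with `d ∣ n`. Then `Φ_{np}` divides `∑_{i<p} Xⁿⁱ = (X^{np} - 1)/(Xⁿ - 1)`,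
and this sum is `≡ p` modulo `Φ_d` because `Xⁿ ≡ 1` there; so `p` lies in `(Φ_d, Φ_{pᵏd})`.
Conversely, write `d = pᵃ n'` with `p ∤ n'`: modulo `p` both `Φ_d` and `Φ_{pᵏd}` are powers of
`Φ_{n'}`, so the ideal is proper, and maximality of `pℤ` forces the contraction to be `pℤ`. -/

namespace Polynomial

theorem cyclotomic_mul_dvd_geom_sum {R : Type*} [CommRing R] {n p : ℕ} (hn : 0 < n)
    (hp : 1 < p) : cyclotomic (n * p) R ∣ ∑ i ∈ Finset.range p, (X ^ n) ^ i := by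
  have hmem : n ∈ (n * p).properDivisors :=
    Nat.mem_properDivisors.2 ⟨dvd_mul_right n p, lt_mul_right hn hp⟩
  have hreg : IsLeftRegular (X ^ n - 1 : R[X]) :=
    (monic_X_pow_sub_C (1 : R) hn.ne').isRegular.left
  rw [← hreg.dvd_cancel_left, mul_comm _ (∑ i ∈ _, _), geom_sum_mul, ← pow_mul]
  exact X_pow_sub_one_mul_cyclotomic_dvd_X_pow_sub_one_of_dvd R hmem

theorem cyclotomic_dvd_geom_sum_sub {R : Type*} [CommRing R] {d n : ℕ} (hdn : d ∣ n) (p : ℕ) :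
    cyclotomic d R ∣ ∑ i ∈ Finset.range p, (X ^ n) ^ i - (p : R[X]) := by
  have hXn : cyclotomic d R ∣ X ^ n - 1 := by
    obtain ⟨e, rfl⟩ := hdn
    refine (cyclotomic.dvd_X_pow_sub_one d R).trans ?_
    simpa [pow_mul] using sub_dvd_pow_sub_pow (X ^ d : R[X]) 1 e
  have hsum : ∑ i ∈ Finset.range p, (X ^ n : R[X]) ^ i - p =
      ∑ i ∈ Finset.range p, ((X ^ n) ^ i - 1) := by
    simp [Finset.sum_sub_distrib]
  rw [hsum]
  exact Finset.dvd_sum fun i _ => hXn.trans (by simpa using sub_dvd_pow_sub_pow (X ^ n : R[X]) 1 i)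

theorem C_mem_span_cyclotomic {R : Type*} [CommRing R] {d n p : ℕ} (hdn : d ∣ n) (hn : 0 < n)
    (hp : 1 < p) : C (p : R) ∈ Ideal.span {cyclotomic d R, cyclotomic (n * p) R} := by
  obtain ⟨u, hu⟩ := cyclotomic_dvd_geom_sum_sub (R := R) hdn p
  obtain ⟨v, hv⟩ := cyclotomic_mul_dvd_geom_sum (R := R) hn hp
  exact Ideal.mem_span_pair.2 ⟨-u, v, by rw [map_natCast]; linear_combination hu - hv⟩

theorem cyclotomic_dvd_cyclotomic_prime_pow_mul (R : Type*) [Ring R] {p n : ℕ}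
    [Fact p.Prime] [CharP R p] (hn : ¬p ∣ n) (b : ℕ) :
    cyclotomic n R ∣ cyclotomic (p ^ b * n) R := by
  rcases b.eq_zero_or_pos with rfl | hb
  · simp
  rw [cyclotomic_mul_prime_pow_eq R hn hb]
  exact dvd_pow_self _ (Nat.sub_ne_zero_of_lt (Nat.pow_lt_pow_right (Fact.out : p.Prime).one_lt
    (Nat.sub_lt hb one_pos)))

theorem span_cyclotomic_prime_pow_mul_ne_top {p n : ℕ} [Fact p.Prime] (hn : ¬p ∣ n) (a b : ℕ) :
    Ideal.span {cyclotomic (p ^ a * n) ℤ, cyclotomic (p ^ b * n) ℤ} ≠ ⊤ := by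
  have hmod : Ideal.span {cyclotomic n (ZMod p)} ≠ ⊤ := by
    rw [Ne, Ideal.span_singleton_eq_top]
    exact not_isUnit_of_degree_pos _ (degree_cyclotomic_pos n _ (Nat.pos_of_ne_zero (by
      rintro rfl; exact hn (dvd_zero p))))
  refine ne_top_of_le_ne_top (Ideal.comap_ne_top (mapRingHom (Int.castRingHom (ZMod p))) hmod) ?_
  rw [Ideal.span_le, Set.insert_subset_iff, Set.singleton_subset_iff]
  simp only [SetLike.mem_coe, Ideal.mem_comap, coe_mapRingHom, map_cyclotomic_int,
    Ideal.mem_span_singleton]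
  exact ⟨cyclotomic_dvd_cyclotomic_prime_pow_mul _ hn a,
    cyclotomic_dvd_cyclotomic_prime_pow_mul _ hn b⟩

end Polynomial

/-- Part of Theorem 2.3: for `d ≥ 1`, `p` prime and `k ≥ 1`, the contraction to `ℤ` of the
ideal `(Φ_d, Φ_{pᵏd})` of `ℤ[X]` is the ideal generated by `p`. -/
theorem comap_span_cyclotomic_eq_span_prime (d p k : ℕ) (hd : 1 ≤ d) (hp : p.Prime)
    (hk : 1 ≤ k) :
    Ideal.comap (algebraMap ℤ (Polynomial ℤ))
        (Ideal.span {cyclotomic d ℤ, cyclotomic (p ^ k * d) ℤ}) =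
      Ideal.span {(p : ℤ)} := by
  have := Fact.mk hp
  refine ((Int.ideal_span_isMaximal_of_prime p).eq_of_le ?_ ?_).symm
  · obtain ⟨a, n, hpn, rfl⟩ := Nat.exists_eq_pow_mul_and_not_dvd (by omega : d ≠ 0) p hp.ne_one
    rw [← mul_assoc, ← pow_add]
    exact Ideal.comap_ne_top _ (span_cyclotomic_prime_pow_mul_ne_top hpn a (k + a))
  · obtain ⟨j, rfl⟩ := Nat.exists_eq_add_of_le' hk
    rw [Ideal.span_le, Set.singleton_subset_iff, SetLike.mem_coe, Ideal.mem_comap,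
      algebraMap_eq, pow_succ, mul_right_comm]
    exact C_mem_span_cyclotomic (dvd_mul_left d _) (Nat.mul_pos (pow_pos hp.pos j) hd) hp.one_lt
end

section
/- Let n ≥ 1 and let d be a positive divisor of n. In the ring R(n) = ℤ[X]/(X^n − 1), the kernel of the natural ring homomorphism R(n) → ∏_{d' ∣ n, d' ≠ d} ℤ[X]/(Φ_{d'}) (induced by the quotient maps ℤ[X] → ℤ[X]/(Φ_{d'})) is the principal ideal of R(n) generated by the class of (X^n − 1)/Φ_d = ∏_{d' ∣ n, d' ≠ d} Φ_{d'}. -/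
open Polynomial

/-! Since `P := ∏_{d' ∣ n, d' ≠ d} Φ_{d'}` divides `Xⁿ - 1`, a class `[f] ∈ R(n)` lies in the ideal
generated by `[P]` exactly when `P ∣ f` in `ℤ[X]`. On the other hand `[f]` lies in the kernel exactly
when every `Φ_{d'}` with `d' ∣ n, d' ≠ d` divides `f`. The two conditions agree because distinct
cyclotomic polynomials are non-associated irreducibles, hence relatively prime, in `ℤ[X]`. -/

/-- The natural ring homomorphism `R(n) = ℤ[X]/(Xⁿ-1) → ∏_{d' ∣ n, d' ≠ d} ℤ[X]/(Φ_{d'})`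
induced by the quotient maps. -/
noncomputable def toProdCyclotomicQuot (n d : ℕ) (hn : 0 < n) :
    (Polynomial ℤ ⧸ Ideal.span {(X : Polynomial ℤ) ^ n - 1}) →+*
      ∀ d' : {d' : ℕ // d' ∈ n.divisors.erase d},
        Polynomial ℤ ⧸ Ideal.span {cyclotomic d'.1 ℤ} :=
  Pi.ringHom fun d' =>
    Ideal.Quotient.factor (S := Ideal.span {(X : Polynomial ℤ) ^ n - 1})
      (T := Ideal.span {cyclotomic d'.1 ℤ})
      (Ideal.span_singleton_le_span_singleton.mpr
        ((Finset.dvd_prod_of_mem (fun i => cyclotomic i ℤ)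
            (Finset.mem_of_mem_erase d'.2)).trans
          (dvd_of_eq (prod_cyclotomic_eq_X_pow_sub_one hn ℤ))))

theorem Ideal.Quotient.mk_mem_span_singleton_mk_iff {R : Type*} [CommRing R] {a b f : R}
    (hba : b ∣ a) :
    Ideal.Quotient.mk (Ideal.span {a}) f ∈ Ideal.span {Ideal.Quotient.mk (Ideal.span {a}) b} ↔
      b ∣ f := by
  rw [← Set.image_singleton, ← Ideal.map_span,
    Ideal.mem_quotient_iff_mem (Ideal.span_singleton_le_span_singleton.mpr hba),
    Ideal.mem_span_singleton]

theorem Polynomial.cyclotomic_isRelPrime {i j : ℕ} (hi : 0 < i) (hj : 0 < j) (hij : i ≠ j) :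
    IsRelPrime (cyclotomic i ℤ) (cyclotomic j ℤ) :=
  (cyclotomic.irreducible hi).isRelPrime_iff_not_dvd.mpr fun hdvd =>
    hij <| cyclotomic_injective (R := ℤ) <|
      eq_of_monic_of_associated (cyclotomic.monic i ℤ) (cyclotomic.monic j ℤ)
        ((cyclotomic.irreducible hi).associated_of_dvd (cyclotomic.irreducible hj) hdvd)

theorem Polynomial.prod_cyclotomic_dvd_iff {s : Finset ℕ} (hs : 0 ∉ s) {f : ℤ[X]} :
    (∏ k ∈ s, cyclotomic k ℤ) ∣ f ↔ ∀ k ∈ s, cyclotomic k ℤ ∣ f := by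
  have hpos : ∀ k ∈ s, 0 < k := fun k hk => Nat.pos_of_ne_zero <| ne_of_mem_of_not_mem hk hs
  refine ⟨fun h k hk => (Finset.dvd_prod_of_mem (cyclotomic · ℤ) hk).trans h, ?_⟩
  exact Finset.prod_dvd_of_isRelPrime fun i hi j hj hij =>
    cyclotomic_isRelPrime (hpos i hi) (hpos j hj) hij

theorem toProdCyclotomicQuot_mk_eq_zero_iff (n d : ℕ) (hn : 0 < n) (f : ℤ[X]) :
    toProdCyclotomicQuot n d hn (Ideal.Quotient.mk _ f) = 0 ↔
      ∀ d' ∈ n.divisors.erase d, cyclotomic d' ℤ ∣ f := by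
  have hcomponent : ∀ d', toProdCyclotomicQuot n d hn (Ideal.Quotient.mk _ f) d' =
      Ideal.Quotient.mk _ f := fun _ => rfl
  simp only [funext_iff, hcomponent, Pi.zero_apply, Ideal.Quotient.eq_zero_iff_mem,
    Ideal.mem_span_singleton, Subtype.forall]

theorem ker_toProdCyclotomicQuot_general (n d : ℕ) (hn : 0 < n) :
    RingHom.ker (toProdCyclotomicQuot n d hn) =
      Ideal.span {Ideal.Quotient.mk (Ideal.span {(X : Polynomial ℤ) ^ n - 1})
        (∏ d' ∈ n.divisors.erase d, cyclotomic d' ℤ)} := by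
  have hdvd : (∏ d' ∈ n.divisors.erase d, cyclotomic d' ℤ) ∣ X ^ n - 1 :=
    prod_cyclotomic_eq_X_pow_sub_one hn ℤ ▸ Finset.prod_dvd_prod_of_subset _ _ _
      (Finset.erase_subset d _)
  have hzero : 0 ∉ n.divisors.erase d := by simp
  ext x
  obtain ⟨f, rfl⟩ := Ideal.Quotient.mk_surjective x
  rw [RingHom.mem_ker, toProdCyclotomicQuot_mk_eq_zero_iff,
    Ideal.Quotient.mk_mem_span_singleton_mk_iff hdvd, prod_cyclotomic_dvd_iff hzero]

/-- Proposition 3.5 (2): for `d ∣ n`, the kernel of the natural map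
`R(n) → ∏_{d' ∣ n, d' ≠ d} R_{d'}` is the principal ideal of `R(n)` generated by the class
of `(Xⁿ - 1)/Φ_d = ∏_{d' ∣ n, d' ≠ d} Φ_{d'}`. -/
theorem ker_toProdCyclotomicQuot (n d : ℕ) (hn : 0 < n) (hd : d ∈ n.divisors) :
    RingHom.ker (toProdCyclotomicQuot n d hn) =
      Ideal.span {Ideal.Quotient.mk (Ideal.span {(X : Polynomial ℤ) ^ n - 1})
        (∏ d' ∈ n.divisors.erase d, cyclotomic d' ℤ)} :=
  ker_toProdCyclotomicQuot_general n d hn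
end

section
/- Let n ≥ 1 and let Λ be a module over R(n) = ℤ[X]/(X^n − 1) whose underlying abelian group is finitely generated and torsion-free. For each positive divisor d of n set Λ_d := {λ ∈ Λ : Φ_d(X)·λ = 0}, the kernel of multiplication by Φ_d. Then the submodules Λ_d for d ∣ n are independent (their sum is a direct sum ⊕_{d ∣ n} Λ_d inside Λ), and the quotient abelian group Λ^0 := Λ / (⊕_{d ∣ n} Λ_d) is finite. -/
open Polynomial

/-!
The cyclotomic polynomials `Φ_d`, `d ∣ n`, are pairwise coprime over `ℚ`, so clearing
denominators in a rational Bézout identity gives a nonzero integer `N` in the ideal of `ℤ[X]`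
generated by the products `∏_{e ≠ d} Φ_e`. On `Λ` every such product sends `Λ` into `Λ_d`
(because `∏_d Φ_d = Xⁿ - 1` acts as zero) and kills `Λ_e` for `e ≠ d`. Hence `N • Λ ⊆ ∑ Λ_d`,
so `Λ⁰` is a finitely generated group of exponent dividing `N`, and an element of
`Λ_d ∩ ∑_{e ≠ d} Λ_e` is killed by `N`, hence is zero since `Λ` is torsion-free.
-/

section ProdCompl

variable {A M ι : Type*} [CommRing A] [AddCommGroup M] [Module A M] [Fintype ι] [DecidableEq ι]
  {f : ι → A} {c : A}

theorem iSupIndep_ker_lsmul_of_isSMulRegular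
    (hc : c ∈ Ideal.span (Set.range fun i => ∏ j ∈ {i}ᶜ, f j)) (hreg : IsSMulRegular M c) :
    iSupIndep fun i => LinearMap.ker (LinearMap.lsmul A M (f i)) := by
  intro i
  rw [Submodule.disjoint_def]
  intro x hxi hx
  have smul_eq_zero_of_dvd : ∀ k a (y : M), f k ∣ a →
      y ∈ LinearMap.ker (LinearMap.lsmul A M (f k)) → a • y = 0 := by
    rintro k a y ⟨b, rfl⟩ hy
    rw [mul_comm, mul_smul, show f k • y = 0 from hy, smul_zero]
  suffices c • x = 0 from hreg (this.trans (smul_zero c).symm)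
  refine (Ideal.span_le (I := Ideal.torsionOf A M x)).mpr ?_ hc
  rintro _ ⟨k, rfl⟩
  rw [SetLike.mem_coe, Ideal.mem_torsionOf_iff]
  by_cases hki : k = i
  · subst hki
    refine (iSup₂_le fun j (hj : j ≠ k) => ?_ : _ ≤ LinearMap.ker (LinearMap.lsmul A M _)) hx
    exact fun y hy => smul_eq_zero_of_dvd j _ y (Finset.dvd_prod_of_mem f (by simpa using hj)) hy
  · exact smul_eq_zero_of_dvd i _ x (Finset.dvd_prod_of_mem f (by simpa using Ne.symm hki)) hxi

theorem smul_mem_iSup_ker_lsmul_of_prod_eq_zero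
    (hc : c ∈ Ideal.span (Set.range fun i => ∏ j ∈ {i}ᶜ, f j)) (hf : ∏ i, f i = 0) (x : M) :
    c • x ∈ ⨆ i, LinearMap.ker (LinearMap.lsmul A M (f i)) := by
  rw [← Submodule.mem_colon_singleton]
  refine Ideal.span_le.mpr ?_ hc
  rintro _ ⟨k, rfl⟩
  rw [SetLike.mem_coe, Submodule.mem_colon_singleton]
  refine Submodule.mem_iSup_of_mem k ?_
  rw [LinearMap.mem_ker, LinearMap.lsmul_apply, smul_smul, ← Fintype.prod_eq_mul_prod_compl, hf,
    zero_smul]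

end ProdCompl

theorem exists_C_mem_span_prod_compl_of_pairwise_isCoprime_map {R K ι : Type*} [CommRing R]
    [IsDomain R] [Field K] [Algebra R K] [IsFractionRing R K] [Fintype ι] [Nonempty ι]
    [DecidableEq ι] {f : ι → R[X]}
    (hf : Pairwise (Function.onFun IsCoprime fun i => (f i).map (algebraMap R K))) :
    ∃ r : R, r ≠ 0 ∧ C r ∈ Ideal.span (Set.range fun i => ∏ j ∈ {i}ᶜ, f j) := by
  -- `K[X]` is the localization of `R[X]` at the nonzero constants.
  let _ := Polynomial.algebra R K
  have _ := Polynomial.isLocalization (nonZeroDivisors R) K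
  obtain ⟨μ, hμ⟩ := exists_sum_eq_one_iff_pairwise_coprime'.mpr hf
  have one_mem : (1 : K[X]) ∈ Ideal.map (algebraMap R[X] K[X])
      (Ideal.span (Set.range fun i => ∏ j ∈ {i}ᶜ, f j)) := by
    rw [Ideal.map_span, ← hμ]
    refine Ideal.sum_mem _ fun i _ => Ideal.mul_mem_left _ _ (Ideal.subset_span ⟨_, ⟨i, rfl⟩, ?_⟩)
    rw [map_prod]
    rfl
  obtain ⟨⟨⟨p, hp⟩, ⟨_, r, hr, rfl⟩⟩, h⟩ :=
    (IsLocalization.mem_map_algebraMap_iff ((nonZeroDivisors R).map C) K[X]).mp one_mem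
  refine ⟨r, nonZeroDivisors.coe_ne_zero ⟨r, hr⟩, ?_⟩
  rw [one_mul, (IsLocalization.injective K[X] (M := (nonZeroDivisors R).map C)
    (le_nonZeroDivisors_of_noZeroDivisors (by simp))).eq_iff] at h
  exact (congrArg (· ∈ _) h).mpr hp

theorem Submodule.finite_quotient_of_zsmul_mem {A M : Type*} [Ring A] [AddCommGroup M]
    [Module A M] [Module.Finite ℤ M] (S : Submodule A M) {N : ℤ} (hN : N ≠ 0)
    (h : ∀ x : M, N • x ∈ S) : Finite (M ⧸ S) := by
  have : Module.Finite ℤ (M ⧸ S) :=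
    Module.Finite.of_surjective S.mkQ.toAddMonoidHom.toIntLinearMap S.mkQ_surjective
  refine Module.finite_of_fg_torsion _ fun x => ?_
  obtain ⟨y, rfl⟩ := S.mkQ_surjective x
  exact ⟨⟨N, mem_nonZeroDivisors_of_ne_zero hN⟩, (S.mkQ.toAddMonoidHom.map_zsmul N y).symm.trans
    ((Submodule.Quotient.mk_eq_zero S).mpr (h y))⟩

/-- Proposition 3.3/Definition 3.2: let `Λ` be a module over `R(n) = ℤ[X]/(Xⁿ-1)` whose
underlying abelian group is finitely generated and torsion-free, and for `d ∣ n` let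
`Λ_d` be the kernel of multiplication by `Φ_d`. Then the `Λ_d` are independent (their sum
is direct) and the quotient `Λ⁰ = Λ / ⊕_{d ∣ n} Λ_d` is finite. -/
theorem lattice_isotypic_decomposition (n : ℕ) (hn : 1 ≤ n)
    (Λ : Type*) [AddCommGroup Λ]
    [Module (Polynomial ℤ ⧸ Ideal.span {(X : Polynomial ℤ) ^ n - 1}) Λ]
    [Module.Finite ℤ Λ] [NoZeroSMulDivisors ℤ Λ] :
    iSupIndep (fun d : {d : ℕ // d ∈ n.divisors} =>
      LinearMap.ker (LinearMap.lsmul (Polynomial ℤ ⧸ Ideal.span {(X : Polynomial ℤ) ^ n - 1}) Λ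
        (Ideal.Quotient.mk _ (cyclotomic d.1 ℤ)))) ∧
    Finite (Λ ⧸ ⨆ d : {d : ℕ // d ∈ n.divisors},
      LinearMap.ker (LinearMap.lsmul (Polynomial ℤ ⧸ Ideal.span {(X : Polynomial ℤ) ^ n - 1}) Λ
        (Ideal.Quotient.mk _ (cyclotomic d.1 ℤ)))) := by
  classical
  have : Nonempty n.divisors := ⟨⟨1, Nat.one_mem_divisors.mpr (by omega)⟩⟩
  obtain ⟨N, hN, hmem⟩ := exists_C_mem_span_prod_compl_of_pairwise_isCoprime_map (K := ℚ)
    (f := fun d : n.divisors => cyclotomic d.1 ℤ) fun d e hde => by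
      simpa only [map_cyclotomic] using cyclotomic.isCoprime_rat (Subtype.coe_ne_coe.mpr hde)
  set π := Ideal.Quotient.mk (Ideal.span {(X : Polynomial ℤ) ^ n - 1})
  have hmem' : π (C N) ∈
      Ideal.span (Set.range fun d : n.divisors => ∏ e ∈ {d}ᶜ, π (cyclotomic e.1 ℤ)) := by
    simpa only [Ideal.map_span, ← Set.range_comp, Function.comp_def, map_prod] using
      Ideal.mem_map_of_mem π hmem
  have hsmul : ∀ x : Λ, π (C N) • x = N • x := fun x => by
    rw [← RingHom.comp_apply, eq_intCast, Int.cast_smul_eq_zsmul]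
  have hprod : ∏ d : n.divisors, π (cyclotomic d.1 ℤ) = 0 := by
    rw [← map_prod, Finset.prod_coe_sort n.divisors (fun d => cyclotomic d ℤ),
      prod_cyclotomic_eq_X_pow_sub_one (by omega), Ideal.Quotient.eq_zero_iff_mem]
    exact Ideal.mem_span_singleton_self _
  refine ⟨iSupIndep_ker_lsmul_of_isSMulRegular hmem' fun x y hxy => ?_,
    Submodule.finite_quotient_of_zsmul_mem _ hN fun x => ?_⟩
  · exact smul_right_injective Λ hN (by simpa only [hsmul] using hxy)
  · exact hsmul x ▸ smul_mem_iSup_ker_lsmul_of_prod_eq_zero hmem' hprod x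
end
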